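/- Let B be an atom with gen(B, ·) the generation function; for m > rank(B), the sequence succ(B^m, A) (successor of m copies of B starting from atom A) takes the form A A₁ … A_k^ℓ, where A₁, …, A_k are pairwise distinct atoms, ℓ ≥ 1, and ℓ > rank(A_k). Equivalently: for i ≥ 1, ranks of the sequence elements are weakly decreasing and bounded by rank(B), consecutive distinct elements have strictly decreasing rank, and once two consecutive elements are equal all subsequent elements are equal. -/
import Mathlib


structure Atom (α β : Type) where
  req : Finset α
  prop : Finset β
deriving DecidableEq

def gen {α β : Type} [DecidableEq α] [DecidableEq β]
    (Obs : Atom α β → Finset α) (A B : Atom α β) : Atom α β :=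
  ⟨A.req ∪ B.req ∪ Obs A ∪ Obs B, A.prop ∩ B.prop⟩

def rank {α β : Type} (REQ : Finset α) (A : Atom α β) : ℕ :=
  REQ.card - A.req.card

/-- Stabilization of the iteration C₀ = A, C_{i+1} = gen(B, C_i): from index 1 on,
ranks are weakly decreasing and bounded by rank(B), consecutive distinct elements have
strictly decreasing rank, and once two consecutive elements coincide all later ones do. -/
theorem iterated_gen_shape {α β : Type} [DecidableEq α] [DecidableEq β]
    (REQ : Finset α) (Obs : Atom α β → Finset α) (hObs : ∀ X, Obs X ⊆ REQ)
    (B A : Atom α β) (hB : B.req ⊆ REQ) (hA : A.req ⊆ REQ)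
    (C : ℕ → Atom α β) (h0 : C 0 = A) (hs : ∀ i, C (i + 1) = gen Obs B (C i)) :
    (∀ i, 1 ≤ i → rank REQ (C (i + 1)) ≤ rank REQ (C i) ∧ rank REQ (C i) ≤ rank REQ B) ∧
    (∀ i, 1 ≤ i → C i ≠ C (i + 1) → rank REQ (C (i + 1)) < rank REQ (C i)) ∧
    (∀ i, 1 ≤ i → C i = C (i + 1) → ∀ j, i ≤ j → C j = C i) := by
  have hreq : ∀ i, (C i).req ⊆ REQ := by
    intro i
    induction i with
    | zero => rw [h0]; exact hA
    | succ n ih =>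
      rw [hs n]
      simp only [gen]
      exact Finset.union_subset (Finset.union_subset (Finset.union_subset hB ih) (hObs B))
        (hObs (C n))
  have hmono : ∀ i, (C i).req ⊆ (C (i + 1)).req := by
    intro i
    rw [hs i]
    intro x hx
    simp [gen]
    tauto
  have hBsub : ∀ i, B.req ⊆ (C (i + 1)).req := by
    intro i
    rw [hs i]
    intro x hx
    simp [gen]
    tauto
  have hprop : ∀ i, 1 ≤ i → (C (i + 1)).prop = (C i).prop := by
    intro i hi
    obtain ⟨n, rfl⟩ := Nat.exists_eq_add_of_le hi
    rw [Nat.add_comm 1 n] at *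
    rw [hs (n + 1), hs n]
    simp only [gen]
    rw [← Finset.inter_assoc, Finset.inter_self]
  refine ⟨?_, ?_, ?_⟩
  · intro i hi
    constructor
    · have h1 := Finset.card_le_card (hmono i)
      have h2 := Finset.card_le_card (hreq (i + 1))
      simp only [rank]; omega
    · obtain ⟨n, rfl⟩ := Nat.exists_eq_add_of_le hi
      have h1 := Finset.card_le_card (hBsub n)
      have h2 := Finset.card_le_card (hreq (1 + n))
      simp only [rank]
      rw [Nat.add_comm 1 n] at h2 ⊢
      omega
  · intro i hi hne
    have hne' : (C i).req ≠ (C (i + 1)).req := by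
      intro h
      apply hne
      have hp := hprop i hi
      cases hCi : C i with
      | mk r p =>
        cases hCi1 : C (i + 1) with
        | mk r' p' =>
          rw [hCi, hCi1] at h hp
          simp_all
    have hssub : (C i).req ⊂ (C (i + 1)).req := ⟨hmono i, fun h =>
      hne' (Finset.Subset.antisymm (hmono i) h)⟩
    have h1 := Finset.card_lt_card hssub
    have h2 := Finset.card_le_card (hreq (i + 1))
    simp only [rank]; omega
  · intro i hi heq j hij
    obtain ⟨n, rfl⟩ := Nat.exists_eq_add_of_le hij
    clear hij
    induction n with
    | zero => rfl
    | succ m ih =>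
      have : i + (m + 1) = (i + m) + 1 := by omega
      rw [this, hs (i + m), ih, ← hs i]
      exact heq.symm
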